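/- arXiv:1301.0760 — 12 statements merged into one kernel-verified Lean document; each statement's English description precedes it below -/
import Mathlib

section
/- Let P be a poset with the upper convexity (convex sets are the upper sets), equipped with a topology in which every principal ideal ↓x is closed. Then every nonempty compact subset K satisfies ↑K = ↑(Min K), where Min K is the set of minimal elements of K; in particular the convex hull of K equals the convex hull of its extreme points. -/
open Set OrderDual

section ClosedIic

variable {P : Type*} [Preorder P] [TopologicalSpace P] [ClosedIicTopology P] {K : Set P}

/-- The sets `Iic z`, `z ∈ c`, form a directed family of closed sets, each meeting `K`
at `z`, so compactness makes their common intersection meet `K`. -/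
theorem IsCompact.exists_mem_lowerBounds_of_isChain (hK : IsCompact K) {c : Set P} (hcK : c ⊆ K)
    (hc : IsChain (· ≤ ·) c) (hne : c.Nonempty) : ∃ lb ∈ K, lb ∈ lowerBounds c := by
  have : Nonempty c := hne.to_subtype
  by_contra! hno
  have hdisj : K ∩ ⋂ z : c, Iic (z : P) = ∅ := by
    ext lb
    simp only [mem_inter_iff, mem_iInter, mem_Iic, Subtype.forall, mem_empty_iff_false, iff_false,
      not_and]
    exact hno lb
  have hc' : IsChain (· ≥ ·) c := hc.symm
  have hdir : Directed (· ⊇ ·) fun z : c ↦ Iic (z : P) :=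
    hc'.directedOn.directed_val.mono_comp _ (g := Iic) fun _ _ h ↦ Iic_subset_Iic.mpr h
  obtain ⟨z, hz⟩ := hK.elim_directed_family_closed _ (fun _ ↦ isClosed_Iic) hdisj hdir
  exact hz.subset ⟨hcK z.2, le_rfl⟩

theorem IsCompact.exists_le_minimal (hK : IsCompact K) {a : P} (ha : a ∈ K) :
    ∃ m ≤ a, Minimal (· ∈ K) m := by
  obtain ⟨m, ham, hm⟩ := zorn_le_nonempty₀ (α := Pᵒᵈ) (ofDual ⁻¹' K)
    (fun _ hcK hc _ hy ↦ hK.exists_mem_lowerBounds_of_isChain hcK hc.symm ⟨_, hy⟩) (toDual a) ha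
  exact ⟨ofDual m, ham, hm⟩

end ClosedIic

theorem krein_milman_posets_upper_general {P : Type*} [PartialOrder P] [TopologicalSpace P]
    (hls : ∀ x : P, IsClosed (Set.Iic x))
    (K : Set P) (hK : IsCompact K) :
    {x | ∃ a ∈ K, a ≤ x} =
      {x | ∃ a ∈ {m | m ∈ K ∧ ∀ b ∈ K, b ≤ m → b = m}, a ≤ x} := by
  have : ClosedIicTopology P := ⟨hls⟩
  ext x
  constructor
  · rintro ⟨a, haK, hax⟩
    obtain ⟨m, hma, hm⟩ := hK.exists_le_minimal haK
    exact ⟨m, ⟨hm.prop, fun _ hb hbm ↦ hm.eq_of_le hb hbm⟩, hma.trans hax⟩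
  · rintro ⟨a, ⟨haK, -⟩, hax⟩
    exact ⟨a, haK, hax⟩

/-- Krein–Milman for posets with the upper convexity: in a poset with a lower
semiclosed topology, the upper closure (convex hull) of a nonempty compact set
equals the upper closure (convex hull) of its set of minimal (extreme) points. -/
theorem krein_milman_posets_upper {P : Type*} [PartialOrder P] [TopologicalSpace P]
    (hls : ∀ x : P, IsClosed (Set.Iic x))
    (K : Set P) (hne : K.Nonempty) (hK : IsCompact K) :
    {x | ∃ a ∈ K, a ≤ x} =
      {x | ∃ a ∈ {m | m ∈ K ∧ ∀ b ∈ K, b ≤ m → b = m}, a ≤ x} :=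
  krein_milman_posets_upper_general hls K hK
end

section
/- Let P be a pospace (a poset with a topology making the order relation closed in P × P), with the upper convexity. If K is a closed convex (= upper) subset of P and A ⊆ K is compact with K equal to the closed convex hull of A, then A contains all extreme points of K, i.e. Min K ⊆ A. -/
/-!
The upper hull of a compact set is closed in a pospace, so `K` is the upper hull of `A` itself.
A minimal point of `K` therefore lies above some `a ∈ A ⊆ K`, and minimality forces it to equal `a`.
-/

/-- The upper hull is the projection to `P` of the closed set `{(a, x) | a ≤ x} ⊆ A × P`, and
projecting away a compact factor is a closed map. -/
lemma IsCompact.isClosed_upperHull {P : Type*} [Preorder P] [TopologicalSpace P]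
    [OrderClosedTopology P] {A : Set P} (hA : IsCompact A) :
    IsClosed {x | ∃ a ∈ A, a ≤ x} := by
  have := isCompact_iff_compactSpace.mp hA
  have hle : IsClosed {p : A × P | (p.1 : P) ≤ p.2} :=
    isClosed_le (continuous_subtype_val.comp continuous_fst) continuous_snd
  convert isClosedMap_snd_of_compactSpace _ hle using 1
  ext x
  simp

theorem milman_posets_general {P : Type*} [PartialOrder P] [TopologicalSpace P]
    (hpo : IsClosed {p : P × P | p.1 ≤ p.2})
    (K : Set P)
    (A : Set P) (hAK : A ⊆ K) (hAc : IsCompact A)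
    (hK : K = closure {x | ∃ a ∈ A, a ≤ x}) :
    {m | m ∈ K ∧ ∀ b ∈ K, b ≤ m → b = m} ⊆ A := by
  have : OrderClosedTopology P := ⟨hpo⟩
  rintro m ⟨hmK, hmin⟩
  rw [hK, hAc.isClosed_upperHull.closure_eq] at hmK
  obtain ⟨a, haA, ham⟩ := hmK
  rwa [← hmin a (hAK haA) ham]

/-- Milman's converse for pospaces with the upper convexity: if a closed upper set `K`
is the closed upper hull of a compact set `A ⊆ K`, then `A` contains all minimal
(extreme) points of `K`. -/
theorem milman_posets {P : Type*} [PartialOrder P] [TopologicalSpace P]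
    (hpo : IsClosed {p : P × P | p.1 ≤ p.2})
    (K : Set P) (hKc : IsClosed K) (hKu : IsUpperSet K)
    (A : Set P) (hAK : A ⊆ K) (hAc : IsCompact A)
    (hK : K = closure {x | ∃ a ∈ A, a ≤ x}) :
    {m | m ∈ K ∧ ∀ b ∈ K, b ≤ m → b = m} ⊆ A :=
  milman_posets_general hpo K A hAK hAc hK
end

section
/- Let S be a topological semilattice (Hausdorff, with continuous join) and K a compact convex subset. Let L be a linear order and f : K → L a convex upper-semicontinuous map attaining its maximum on K. Then argmax f is a nonempty compact extreme subset of K, and every minimal element of argmax f is an extreme point of K; hence f attains its maximum at an extreme point of K (Bauer's maximum principle for semilattices). -/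
def IsSubsemilattice {α : Type*} [SemilatticeSup α] (T : Set α) : Prop :=
  ∀ ⦃x⦄, x ∈ T → ∀ ⦃y⦄, y ∈ T → x ⊔ y ∈ T

def semilatticeHull {α : Type*} [SemilatticeSup α] (A : Set α) : Set α :=
  ⋂₀ {T | IsSubsemilattice T ∧ A ⊆ T}

/-- The set of maximizers of `f` on `K`. -/
def argmaxSet {S L : Type*} [LinearOrder L] (f : S → L) (K : Set S) : Set S :=
  {x | x ∈ K ∧ ∀ y ∈ K, f y ≤ f x}

/-- Wallace: a nonempty compact subset of a topological semilattice has a minimal element. -/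
theorem exists_minimal_of_isCompact {S : Type*} [SemilatticeSup S] [TopologicalSpace S]
    [T2Space S] (hcont : Continuous fun p : S × S => p.1 ⊔ p.2)
    (A : Set S) (hA : IsCompact A) (hne : A.Nonempty) :
    ∃ m ∈ A, ∀ b ∈ A, b ≤ m → b = m := by
  obtain ⟨a, ha⟩ := hne
  have hclosed : ∀ z : S, IsClosed {x : S | x ≤ z} := by
    intro z
    have h : {x : S | x ≤ z} = (fun x : S => x ⊔ z) ⁻¹' {z} := by
      ext x; simp [sup_eq_right]
    rw [h]
    exact isClosed_singleton.preimage (hcont.comp (continuous_id.prodMk continuous_const))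
  have hAcl : IsClosed A := hA.isClosed
  have key : ∀ c ⊆ (OrderDual.ofDual ⁻¹' A : Set Sᵒᵈ), IsChain (· ≤ ·) c → ∀ y ∈ c,
      ∃ ub ∈ (OrderDual.ofDual ⁻¹' A : Set Sᵒᵈ), ∀ z ∈ c, z ≤ ub := by
    intro c hcs hc y hy
    have hne' : Nonempty c := ⟨⟨y, hy⟩⟩
    set t : c → Set S := fun z => {x ∈ A | x ≤ OrderDual.ofDual z.1} with ht
    have htcl : ∀ z : c, IsClosed (t z) := fun z => hAcl.inter (hclosed _)
    have htc : ∀ z : c, IsCompact (t z) := fun z => hA.inter_right (hclosed _)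
    have htn : ∀ z : c, (t z).Nonempty := fun z => ⟨OrderDual.ofDual z.1, hcs z.2, le_rfl⟩
    have htd : Directed (· ⊇ ·) t := by
      intro z₁ z₂
      rcases eq_or_ne z₁.1 z₂.1 with h | h
      · exact ⟨z₁, subset_rfl, by rw [ht]; simp [h]⟩
      rcases hc z₁.2 z₂.2 h with h1 | h1
      · exact ⟨z₂, fun x hx => ⟨hx.1, hx.2.trans h1⟩, subset_rfl⟩
      · exact ⟨z₁, subset_rfl, fun x hx => ⟨hx.1, hx.2.trans h1⟩⟩
    obtain ⟨lb, hlb⟩ := IsCompact.nonempty_iInter_of_directed_nonempty_isCompact_isClosed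
      t htd htn htc htcl
    simp only [Set.mem_iInter] at hlb
    exact ⟨OrderDual.toDual lb, (hlb ⟨y, hy⟩).1, fun z hz => (hlb ⟨z, hz⟩).2⟩
  obtain ⟨m, hm⟩ := zorn_le_nonempty₀ (α := Sᵒᵈ) (OrderDual.ofDual ⁻¹' A)
    key (OrderDual.toDual a) ha
  exact ⟨m, hm.2.1, fun b hb hbm => le_antisymm hbm (hm.2.2 hb hbm)⟩

/-- Bauer's maximum principle for semilattices: if `f : K → L` is convex and
upper-semicontinuous on the compact convex set `K` and attains its maximum,
then `argmax f` is a nonempty compact extreme subset of `K`, each of its minimal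
elements is an extreme point of `K`, and `f` attains its maximum at an
extreme point of `K`. -/
theorem bauer_maximum_principle {S : Type*} [SemilatticeSup S] [TopologicalSpace S]
    [T2Space S] (hcont : Continuous fun p : S × S => p.1 ⊔ p.2)
    (K : Set S) (hKne : K.Nonempty) (hKcomp : IsCompact K) (hKconv : IsSubsemilattice K)
    {L : Type*} [LinearOrder L] (f : S → L)
    (hconv : ∀ x ∈ K, ∀ y ∈ K, f (x ⊔ y) ≤ max (f x) (f y))
    (husc : ∀ t : L, ∃ U : Set S, IsOpen U ∧ {x | x ∈ K ∧ f x < t} = K ∩ U)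
    (hattain : ∃ x ∈ K, ∀ y ∈ K, f y ≤ f x) :
    (argmaxSet f K).Nonempty ∧ IsCompact (argmaxSet f K) ∧
    (∀ a ∈ K, ∀ b ∈ K, a ⊔ b ∈ argmaxSet f K → a ∈ argmaxSet f K ∨ b ∈ argmaxSet f K) ∧
    (∀ m ∈ argmaxSet f K, (∀ b ∈ argmaxSet f K, b ≤ m → b = m) →
      m ∉ semilatticeHull (K \ {m})) ∧
    ∃ e ∈ K, e ∉ semilatticeHull (K \ {e}) ∧ ∀ y ∈ K, f y ≤ f e := by
  obtain ⟨x₀, hx₀K, hx₀⟩ := hattain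
  have hAne : (argmaxSet f K).Nonempty := ⟨x₀, hx₀K, hx₀⟩
  obtain ⟨U, hU, hUeq⟩ := husc (f x₀)
  have hAeq : argmaxSet f K = K ∩ Uᶜ := by
    ext x
    constructor
    · rintro ⟨hxK, hx⟩
      refine ⟨hxK, fun hxU => ?_⟩
      have h2 : x ∈ K ∩ U := ⟨hxK, hxU⟩
      rw [← hUeq] at h2
      exact absurd (hx x₀ hx₀K) (not_le_of_gt h2.2)
    · rintro ⟨hxK, hxU⟩
      refine ⟨hxK, fun y hy => ?_⟩
      have hnot : ¬ (x ∈ K ∧ f x < f x₀) := by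
        intro h
        have h3 : x ∈ {x | x ∈ K ∧ f x < f x₀} := h
        rw [hUeq] at h3
        exact hxU h3.2
      exact le_trans (hx₀ y hy) (not_lt.1 fun h => hnot ⟨hxK, h⟩)
  have hAcomp : IsCompact (argmaxSet f K) := by
    rw [hAeq]; exact hKcomp.inter_right hU.isClosed_compl
  have hAext : ∀ a ∈ K, ∀ b ∈ K, a ⊔ b ∈ argmaxSet f K →
      a ∈ argmaxSet f K ∨ b ∈ argmaxSet f K := by
    intro a ha b hb hab
    have h1 := hconv a ha b hb
    rcases max_cases (f a) (f b) with ⟨he, _⟩ | ⟨he, _⟩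
    · exact Or.inl ⟨ha, fun y hy => le_trans (hab.2 y hy) (he ▸ h1)⟩
    · exact Or.inr ⟨hb, fun y hy => le_trans (hab.2 y hy) (he ▸ h1)⟩
  have hmin : ∀ m ∈ argmaxSet f K, (∀ b ∈ argmaxSet f K, b ≤ m → b = m) →
      m ∉ semilatticeHull (K \ {m}) := by
    intro m hm hminim hmem
    set T : Set S := {x | x ∈ K ∧ (x ∈ argmaxSet f K → ¬ x ≤ m)} with hT
    have hTsub : IsSubsemilattice T := by
      intro x hx y hy
      refine ⟨hKconv hx.1 hy.1, fun hxy hle => ?_⟩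
      rcases hAext x hx.1 y hy.1 hxy with h | h
      · exact hx.2 h (le_trans le_sup_left hle)
      · exact hy.2 h (le_trans le_sup_right hle)
    have hTcont : K \ {m} ⊆ T := by
      rintro x ⟨hxK, hxm⟩
      exact ⟨hxK, fun hxA hle => hxm (hminim x hxA hle)⟩
    have := hmem T ⟨hTsub, hTcont⟩
    exact this.2 hm le_rfl
  refine ⟨hAne, hAcomp, hAext, hmin, ?_⟩
  obtain ⟨m, hmA, hmmin⟩ := exists_minimal_of_isCompact hcont (argmaxSet f K) hAcomp hAne
  exact ⟨m, hmA.1, hmin m hmA hmmin, hmA.2⟩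
end

section
/- In a topological semilattice with finite breadth b, the convex hull (generated subsemilattice) of any compact subset A equals the set {x₁ ⊕ ⋯ ⊕ x_b : x₁, …, x_b ∈ A} and is compact. -/
/-!
The hull of `A` is the set of joins of nonempty finite subsets of `A`: this set is closed
under `⊔` and lies in every subsemilattice containing `A`. Breadth `b` lets every such join be
taken over at most `b` elements, and repeating one of them pads the join to exactly `b` terms.
So the hull is the image of the compact set `Aᵇ` under the continuous map
`(x₁, …, x_b) ↦ x₁ ⊔ ⋯ ⊔ x_b`.
-/

open Finset

def HasBreadthLE (α : Type*) [SemilatticeSup α] (b : ℕ) : Prop :=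
  ∀ (F : Finset α) (hF : F.Nonempty), ∃ G : Finset α, G ⊆ F ∧
    ∃ hG : G.Nonempty, G.card ≤ b ∧ G.sup' hG id = F.sup' hF id

def finsetSups {α : Type*} [SemilatticeSup α] (A : Set α) : Set α :=
  {x | ∃ (F : Finset α) (hF : F.Nonempty), ↑F ⊆ A ∧ x = F.sup' hF id}

section SemilatticeSup

variable {α : Type*} [SemilatticeSup α]

theorem semilatticeHull_subset {A T : Set α} (hT : IsSubsemilattice T) (hAT : A ⊆ T) :
    semilatticeHull A ⊆ T :=
  Set.sInter_subset_of_mem ⟨hT, hAT⟩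

theorem subset_finsetSups (A : Set α) : A ⊆ finsetSups A := fun a ha =>
  ⟨{a}, singleton_nonempty a, by simpa using ha, (sup'_singleton id).symm⟩

theorem isSubsemilattice_finsetSups (A : Set α) : IsSubsemilattice (finsetSups A) := by
  classical
  rintro _ ⟨F, hF, hFA, rfl⟩ _ ⟨F', hF', hF'A, rfl⟩
  exact ⟨F ∪ F', hF.mono subset_union_left, by simpa using Set.union_subset hFA hF'A,
    (sup'_union hF hF' id).symm⟩

theorem finsetSups_subset_of_isSubsemilattice {A T : Set α} (hT : IsSubsemilattice T)
    (hAT : A ⊆ T) : finsetSups A ⊆ T := by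
  rintro _ ⟨F, hF, hFA, rfl⟩
  exact sup'_mem T (fun x hx y hy => hT hx hy) F hF id fun a ha => hAT (hFA ha)

theorem semilatticeHull_eq_finsetSups (A : Set α) : semilatticeHull A = finsetSups A :=
  (semilatticeHull_subset (isSubsemilattice_finsetSups A) (subset_finsetSups A)).antisymm
    fun _ hx _ ⟨hT, hAT⟩ => finsetSups_subset_of_isSubsemilattice hT hAT hx

theorem exists_fin_sup'_eq_of_card_le {G : Finset α} (hG : G.Nonempty) {b : ℕ}
    (hcard : G.card ≤ b) (hne : (univ : Finset (Fin b)).Nonempty) :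
    ∃ g : Fin b → α, (∀ i, g i ∈ G) ∧ univ.sup' hne g = G.sup' hG id := by
  have := hG.to_subtype
  obtain ⟨f, hf⟩ := Function.exists_surjective_iff.mpr
    ⟨inferInstance, ⟨G.equivFin.toEmbedding.trans (Fin.castLEEmb hcard)⟩⟩
  refine ⟨fun i => f i, fun i => (f i).2, le_antisymm ?_ ?_⟩
  · exact sup'_le _ _ fun i _ => le_sup' id (f i).2
  · refine sup'_le _ _ fun y hy => ?_
    obtain ⟨i, hi⟩ := hf ⟨y, hy⟩
    exact le_sup'_of_le (fun i => (f i : α)) (mem_univ i) (by rw [hi]; rfl)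

theorem finsetSups_eq_of_hasBreadthLE {b : ℕ} (hbreadth : HasBreadthLE α b)
    (hne : (univ : Finset (Fin b)).Nonempty) (A : Set α) :
    finsetSups A = {x | ∃ g : Fin b → α, (∀ i, g i ∈ A) ∧ x = univ.sup' hne g} := by
  classical
  ext x
  constructor
  · rintro ⟨F, hF, hFA, rfl⟩
    obtain ⟨G, hGF, hG, hcard, hsup⟩ := hbreadth F hF
    obtain ⟨g, hgG, hg⟩ := exists_fin_sup'_eq_of_card_le hG hcard hne
    exact ⟨g, fun i => hFA (hGF (hgG i)), by rw [hg, hsup]⟩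
  · rintro ⟨g, hgA, rfl⟩
    exact ⟨univ.image g, hne.image g, by simpa [Set.range_subset_iff] using hgA,
      (sup'_image (hne.image g) id).symm⟩

end SemilatticeSup

theorem IsCompact.setOf_fintype_sup' {α ι : Type*} [SemilatticeSup α] [TopologicalSpace α]
    [ContinuousSup α] [Fintype ι] {A : Set α} (hA : IsCompact A)
    (hne : (univ : Finset ι).Nonempty) :
    IsCompact {x | ∃ g : ι → α, (∀ i, g i ∈ A) ∧ x = univ.sup' hne g} := by
  have himage : {x | ∃ g : ι → α, (∀ i, g i ∈ A) ∧ x = univ.sup' hne g} =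
      (fun g : ι → α => univ.sup' hne g) '' Set.univ.pi fun _ => A := by
    ext x
    simp [eq_comm]
  rw [himage]
  exact (isCompact_univ_pi fun _ => hA).image
    (Continuous.finset_sup'_apply hne fun i _ => continuous_apply i)

theorem hull_eq_and_compact_of_finite_breadth_general {S : Type*} [SemilatticeSup S]
    [TopologicalSpace S]
    (hcont : Continuous fun p : S × S => p.1 ⊔ p.2)
    (b : ℕ) (hb : 0 < b)
    (hbreadth : ∀ (F : Finset S) (hF : F.Nonempty), ∃ G : Finset S, G ⊆ F ∧
      ∃ hG : G.Nonempty, G.card ≤ b ∧ G.sup' hG id = F.sup' hF id)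
    (A : Set S) (hA : IsCompact A) :
    semilatticeHull A =
      {x | ∃ g : Fin b → S, (∀ i, g i ∈ A) ∧
        x = Finset.univ.sup' ⟨⟨0, hb⟩, Finset.mem_univ _⟩ g} ∧
    IsCompact (semilatticeHull A) := by
  have : ContinuousSup S := ⟨hcont⟩
  have hne : (univ : Finset (Fin b)).Nonempty := ⟨⟨0, hb⟩, mem_univ _⟩
  have hull_eq := (semilatticeHull_eq_finsetSups A).trans
    (finsetSups_eq_of_hasBreadthLE hbreadth hne A)
  exact ⟨hull_eq, hull_eq ▸ hA.setOf_fintype_sup' hne⟩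

/-- In a topological semilattice with finite breadth `b`, the convex hull of a
compact set `A` equals the set of `b`-fold joins of elements of `A`, and is compact. -/
theorem hull_eq_and_compact_of_finite_breadth {S : Type*} [SemilatticeSup S]
    [TopologicalSpace S] [T2Space S]
    (hcont : Continuous fun p : S × S => p.1 ⊔ p.2)
    (b : ℕ) (hb : 0 < b)
    (hbreadth : ∀ (F : Finset S) (hF : F.Nonempty), ∃ G : Finset S, G ⊆ F ∧
      ∃ hG : G.Nonempty, G.card ≤ b ∧ G.sup' hG id = F.sup' hF id)
    (hleast : ∀ b' < b, ¬ ∀ (F : Finset S) (hF : F.Nonempty), ∃ G : Finset S, G ⊆ F ∧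
      ∃ hG : G.Nonempty, G.card ≤ b' ∧ G.sup' hG id = F.sup' hF id)
    (A : Set S) (hA : IsCompact A) :
    semilatticeHull A =
      {x | ∃ g : Fin b → S, (∀ i, g i ∈ A) ∧
        x = Finset.univ.sup' ⟨⟨0, hb⟩, Finset.mem_univ _⟩ g} ∧
    IsCompact (semilatticeHull A) :=
  hull_eq_and_compact_of_finite_breadth_general hcont b hb hbreadth A hA
end

section
/- Every topological semilattice with finite breadth is locally convex, i.e. every point has a neighborhood basis of subsemilattices. -/
section Aux
variable {S : Type*} [SemilatticeSup S]

lemma sup'_fin_succ (n : ℕ) (f : Fin (n+2) → S) :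
    Finset.univ.sup' ⟨0, Finset.mem_univ 0⟩ f
      = f 0 ⊔ Finset.univ.sup' ⟨0, Finset.mem_univ 0⟩ (f ∘ Fin.succ) := by
  apply le_antisymm
  · apply Finset.sup'_le
    intro i _
    refine Fin.cases ?_ ?_ i
    · exact le_sup_left
    · intro j
      exact le_sup_of_le_right (Finset.le_sup' (f ∘ Fin.succ) (Finset.mem_univ j))
  · apply sup_le
    · exact Finset.le_sup' f (Finset.mem_univ 0)
    · apply Finset.sup'_le
      intro j _
      exact Finset.le_sup' f (Finset.mem_univ j.succ)

lemma sup'_fin_continuous [TopologicalSpace S]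
    (hcont : Continuous fun p : S × S => p.1 ⊔ p.2) :
    ∀ n : ℕ, Continuous fun f : Fin (n+1) → S =>
      Finset.univ.sup' ⟨0, Finset.mem_univ 0⟩ f := by
  intro n
  induction n with
  | zero =>
    have : (fun f : Fin 1 → S => Finset.univ.sup' ⟨0, Finset.mem_univ 0⟩ f)
        = fun f => f 0 := by
      funext f
      simp [Finset.sup']
    rw [this]; exact continuous_apply 0
  | succ n ih =>
    have heq : (fun f : Fin (n+2) → S => Finset.univ.sup' ⟨0, Finset.mem_univ 0⟩ f)
        = fun f => f 0 ⊔ Finset.univ.sup' ⟨0, Finset.mem_univ 0⟩ (f ∘ Fin.succ) := by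
      funext f; exact sup'_fin_succ n f
    rw [heq]
    have hc2 : Continuous fun f : Fin (n+2) → S => (f ∘ Fin.succ : Fin (n+1) → S) :=
      continuous_pi fun i => continuous_apply i.succ
    exact hcont.comp ((continuous_apply 0).prodMk (ih.comp hc2))

lemma pad_tuple (n : ℕ) (G : Finset S) (hG : G.Nonempty) (hcard : G.card ≤ n + 1) :
    ∃ f : Fin (n+1) → S, (∀ i, f i ∈ G) ∧
      Finset.univ.sup' ⟨0, Finset.mem_univ 0⟩ f = G.sup' hG id := by
  obtain ⟨g0, hg0⟩ := hG
  have hlen : G.toList.length = G.card := Finset.length_toList G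
  refine ⟨fun i => G.toList.getD i g0, ?_, ?_⟩
  · intro i
    show G.toList.getD (i : ℕ) g0 ∈ G
    rcases Nat.lt_or_ge (i : ℕ) G.toList.length with h | h
    · rw [List.getD_eq_getElem _ _ h]
      exact Finset.mem_toList.mp (G.toList.getElem_mem h)
    · rw [List.getD_eq_default _ _ h]; exact hg0
  · apply le_antisymm
    · apply Finset.sup'_le
      intro i _
      show G.toList.getD (i : ℕ) g0 ≤ _
      rcases Nat.lt_or_ge (i : ℕ) G.toList.length with h | h
      · rw [List.getD_eq_getElem _ _ h]
        exact Finset.le_sup' id (Finset.mem_toList.mp (G.toList.getElem_mem h))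
      · rw [List.getD_eq_default _ _ h]; exact Finset.le_sup' id hg0
    · apply Finset.sup'_le
      intro g hg
      have hex : ∃ i : ℕ, ∃ hi : i < G.toList.length, G.toList.get ⟨i, hi⟩ = g := by
        obtain ⟨i, hi⟩ := List.get_of_mem (Finset.mem_toList.mpr hg)
        exact ⟨i, i.isLt, hi⟩
      obtain ⟨i, hi, hgi⟩ := hex
      have hin : i < n + 1 := by omega
      have hval : (fun j : Fin (n+1) => G.toList.getD (j : ℕ) g0) ⟨i, hin⟩ = g := by
        show G.toList.getD i g0 = g
        rw [List.getD_eq_getElem _ _ hi]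
        simpa [List.get] using hgi
      calc (id g : S) = _ := hval.symm
        _ ≤ _ := Finset.le_sup' (fun j : Fin (n+1) => G.toList.getD (j : ℕ) g0)
            (Finset.mem_univ (⟨i, hin⟩ : Fin (n+1)))

end Aux

/-- Lawson: every topological semilattice with finite breadth is locally convex,
i.e. every point has a neighbourhood basis of subsemilattices. -/
theorem locally_convex_of_finite_breadth {S : Type*} [SemilatticeSup S]
    [TopologicalSpace S] [T2Space S]
    (hcont : Continuous fun p : S × S => p.1 ⊔ p.2)
    (b : ℕ)
    (hbreadth : ∀ (F : Finset S) (hF : F.Nonempty), ∃ G : Finset S, G ⊆ F ∧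
      ∃ hG : G.Nonempty, G.card ≤ b ∧ G.sup' hG id = F.sup' hF id) :
    ∀ x : S, ∀ U ∈ nhds x, ∃ V ∈ nhds x, V ⊆ U ∧ IsSubsemilattice V := by
  classical
  intro x U hU
  obtain _ | n := b
  · exfalso
    obtain ⟨G, _, hGne, hcard, _⟩ := hbreadth {x} ⟨x, Finset.mem_singleton_self x⟩
    have := Finset.card_pos.mpr hGne
    omega
  set g : (Fin (n+1) → S) → S :=
    fun f => Finset.univ.sup' ⟨0, Finset.mem_univ 0⟩ f with hgdef
  have hg : Continuous g := sup'_fin_continuous hcont n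
  have hgx : g (fun _ => x) = x := Finset.sup'_const _ x
  have hpre : g ⁻¹' U ∈ nhds (fun _ => x : Fin (n+1) → S) :=
    hg.continuousAt.preimage_mem_nhds (by rw [hgx]; exact hU)
  rw [nhds_pi, Filter.mem_pi] at hpre
  obtain ⟨I, hIfin, t, ht, hsub⟩ := hpre
  set W : Set S := ⋂ i, t i with hWdef
  have hW : W ∈ nhds x := Filter.iInter_mem.mpr ht
  have hWU : ∀ f : Fin (n+1) → S, (∀ i, f i ∈ W) → g f ∈ U := by
    intro f hf
    apply hsub
    intro i _
    exact Set.mem_iInter.mp (hf i) i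
  refine ⟨{s | ∃ F : Finset S, ∃ hF : F.Nonempty, ↑F ⊆ W ∧ F.sup' hF id = s}, ?_, ?_, ?_⟩
  · apply Filter.mem_of_superset hW
    intro w hw
    exact ⟨{w}, ⟨w, Finset.mem_singleton_self w⟩, by simpa using hw, by simp⟩
  · rintro s ⟨F, hF, hFW, rfl⟩
    obtain ⟨G, hGF, hGne, hcard, hsup⟩ := hbreadth F hF
    obtain ⟨f, hfG, hfsup⟩ := pad_tuple n G hGne hcard
    have hgf : g f = F.sup' hF id := hfsup.trans hsup
    rw [← hgf]
    exact hWU f fun i => hFW (hGF (hfG i))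
  · rintro a ⟨F, hF, hFW, rfl⟩ c ⟨F', hF', hFW', rfl⟩
    refine ⟨F ∪ F', hF.inl, ?_, ?_⟩
    · rw [Finset.coe_union]
      exact Set.union_subset hFW hFW'
    · exact Finset.sup'_union hF hF' id
end

section
/- The Helly number of a semilattice with its algebraic convexity equals its depth (the supremum of cardinalities of chains). -/
/-- Key combinatorial lemma: given points `x i` for `i` in a finite index set `G` in a
join-semilattice, either there is a nonempty `B ⊆ G` whose sup admits, for every `i ∈ G`,
a representation as a sup over a nonempty subset avoiding `i`; or there is a chain whose
cardinality is `G.card`. -/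
private lemma aux_chain {α ι : Type*} [SemilatticeSup α] [DecidableEq α] [DecidableEq ι] (x : ι → α)
    (G : Finset ι) :
    (∃ B : Finset ι, B ⊆ G ∧ ∃ hB : B.Nonempty,
      ∀ i ∈ G, ∃ Bi : Finset ι, Bi ⊆ G.erase i ∧ ∃ hBi : Bi.Nonempty,
        Bi.sup' hBi x = B.sup' hB x)
    ∨ (∃ C : Finset α, (∀ a ∈ C, ∀ b ∈ C, a ≤ b ∨ b ≤ a) ∧ C.card = G.card ∧
        ∀ c ∈ C, ∃ B : Finset ι, B ⊆ G ∧ ∃ hB : B.Nonempty, c = B.sup' hB x) := by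
  induction G using Finset.strongInduction with
  | _ G ih =>
  rcases G.eq_empty_or_nonempty with rfl | hG
  · right
    exact ⟨∅, by simp, by simp, by simp⟩
  by_cases hE : ∀ j ∈ G, ∃ B : Finset ι, B ⊆ G.erase j ∧ ∃ hB : B.Nonempty, x j ≤ B.sup' hB x
  · -- every point is inessential: B = G works
    left
    refine ⟨G, Finset.Subset.refl G, hG, fun i hi => ?_⟩
    obtain ⟨B, hBsub, hBne, hle⟩ := hE i hi
    have herase_ne : (G.erase i).Nonempty := hBne.mono hBsub
    refine ⟨G.erase i, Finset.Subset.refl _, herase_ne, ?_⟩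
    apply le_antisymm
    · exact Finset.sup'_mono x (G.erase_subset i) herase_ne
    · apply Finset.sup'_le
      intro b hb
      by_cases hbi : b = i
      · subst hbi
        exact hle.trans (Finset.sup'_mono x hBsub hBne)
      · exact Finset.le_sup' x (Finset.mem_erase.mpr ⟨hbi, hb⟩)
  · -- some essential point j
    push_neg at hE
    obtain ⟨j, hjG, hj⟩ := hE
    rcases ih (G.erase j) (Finset.erase_ssubset hjG) with ⟨B, hBsub, hBne, hrep⟩ |
      ⟨C', hchain', hcard', hreps'⟩
    · -- success lifts
      left
      refine ⟨B, hBsub.trans (G.erase_subset j), hBne, fun i hi => ?_⟩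
      by_cases hij : i = j
      · subst hij
        exact ⟨B, hBsub, hBne, rfl⟩
      · obtain ⟨Bi, hBisub, hBineq⟩ := hrep i (Finset.mem_erase.mpr ⟨hij, hi⟩)
        exact ⟨Bi, hBisub.trans (Finset.erase_subset_erase i (G.erase_subset j)), hBineq⟩
    · -- failure: extend the chain
      right
      rcases (G.erase j).eq_empty_or_nonempty with hG' | hG'
      · -- G = {j}
        have hcard1 : G.card = 1 := by
          have := Finset.card_erase_add_one hjG
          rw [hG'] at this
          simpa using this.symm
        refine ⟨{x j}, by simp, by simp [hcard1], ?_⟩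
        intro c hc
        rw [Finset.mem_singleton] at hc
        subst hc
        exact ⟨{j}, Finset.singleton_subset_iff.mpr hjG, Finset.singleton_nonempty j,
          (Finset.sup'_singleton x).symm⟩
      · have hlt : ∀ c ∈ C', c < G.sup' hG x := by
          intro c hc
          obtain ⟨B, hBsub, hBne, rfl⟩ := hreps' c hc
          have h1 : B.sup' hBne x ≤ (G.erase j).sup' hG' x := Finset.sup'_mono x hBsub hBne
          have h2 : (G.erase j).sup' hG' x < G.sup' hG x := by
            refine lt_of_le_of_ne (Finset.sup'_mono x (G.erase_subset j) hG') ?_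
            intro heq
            exact hj (G.erase j) (Finset.Subset.refl _) hG'
              (heq ▸ Finset.le_sup' x hjG)
          exact lt_of_le_of_lt h1 h2
        have hnotmem : G.sup' hG x ∉ C' := fun h => lt_irrefl _ (hlt _ h)
        refine ⟨insert (G.sup' hG x) C', ?_, ?_, ?_⟩
        · intro a ha b hb
          rw [Finset.mem_insert] at ha hb
          rcases ha with rfl | ha
          · rcases hb with rfl | hb
            · exact Or.inl le_rfl
            · exact Or.inr (hlt b hb).le
          · rcases hb with rfl | hb
            · exact Or.inl (hlt a ha).le
            · exact hchain' a ha b hb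
        · rw [Finset.card_insert_of_notMem hnotmem, hcard',
            Finset.card_erase_add_one hjG]
        · intro c hc
          rw [Finset.mem_insert] at hc
          rcases hc with rfl | hc
          · exact ⟨G, Finset.Subset.refl G, hG, rfl⟩
          · obtain ⟨B, hBsub, hBrest⟩ := hreps' c hc
            exact ⟨B, hBsub.trans (G.erase_subset j), hBrest⟩

/-- The Helly number of a semilattice with the algebraic convexity equals its depth:
for every `n`, the Helly property holds at `n` iff every chain has cardinality at most `n`. -/
theorem helly_eq_depth {S : Type*} [SemilatticeSup S] (n : ℕ) :
    (∀ 𝒞 : Finset (Set S), (∀ C ∈ 𝒞, IsSubsemilattice C) →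
        (∀ 𝒟 ⊆ 𝒞, 𝒟.card ≤ n → ∃ x, ∀ C ∈ 𝒟, x ∈ C) →
        ∃ x, ∀ C ∈ 𝒞, x ∈ C)
    ↔ (∀ C : Finset S, (∀ a ∈ C, ∀ b ∈ C, a ≤ b ∨ b ≤ a) → C.card ≤ n) := by
  classical
  constructor
  · -- Helly property implies depth bound
    intro h C hchain
    by_contra hn
    push_neg at hn
    have hCne : C.Nonempty := Finset.card_pos.mp (lt_of_le_of_lt (Nat.zero_le n) hn)
    set f : S → Set S := fun a => {y : S | y ∈ C ∧ y ≠ a} with hf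
    have hfinj : Set.InjOn f ↑C := by
      intro a ha b hb hab
      by_contra hne
      have : a ∈ f b := ⟨ha, hne⟩
      rw [← hab] at this
      exact this.2 rfl
    set 𝒞 : Finset (Set S) := C.image f with h𝒞
    have hcard𝒞 : 𝒞.card = C.card := Finset.card_image_of_injOn hfinj
    have h1 : ∀ D ∈ 𝒞, IsSubsemilattice D := by
      intro D hD
      obtain ⟨a, _, rfl⟩ := Finset.mem_image.mp hD
      intro u hu v hv
      rcases hchain u hu.1 v hv.1 with hle | hle
      · rw [sup_eq_right.mpr hle]; exact hv
      · rw [sup_eq_left.mpr hle]; exact hu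
    have h2 : ∀ 𝒟 ⊆ 𝒞, 𝒟.card ≤ n → ∃ x, ∀ D ∈ 𝒟, x ∈ D := by
      intro 𝒟 h𝒟 hDcard
      have hss : 𝒟 ⊂ 𝒞 := by
        refine Finset.ssubset_iff_subset_ne.mpr ⟨h𝒟, fun hEq => ?_⟩
        rw [hEq, hcard𝒞] at hDcard
        omega
      obtain ⟨D, hD𝒞, hD𝒟⟩ := Finset.exists_of_ssubset hss
      obtain ⟨a, haC, rfl⟩ := Finset.mem_image.mp hD𝒞
      refine ⟨a, fun E hE => ?_⟩
      obtain ⟨b, hbC, rfl⟩ := Finset.mem_image.mp (h𝒟 hE)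
      refine ⟨haC, fun hab => ?_⟩
      exact hD𝒟 (hab ▸ hE)
    obtain ⟨x, hx⟩ := h 𝒞 h1 h2
    obtain ⟨a₀, ha₀⟩ := hCne
    have hxC : x ∈ C := (hx (f a₀) (Finset.mem_image_of_mem f ha₀)).1
    exact (hx (f x) (Finset.mem_image_of_mem f hxC)).2 rfl
  · -- depth bound implies Helly property
    intro hd
    have main : ∀ 𝒞 : Finset (Set S), (∀ C ∈ 𝒞, IsSubsemilattice C) →
        (∀ 𝒟 ⊆ 𝒞, 𝒟.card ≤ n → ∃ x, ∀ C ∈ 𝒟, x ∈ C) → ∃ x, ∀ C ∈ 𝒞, x ∈ C := by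
      intro 𝒞
      induction 𝒞 using Finset.strongInduction with
      | _ 𝒞 ih =>
      intro hconv hsub
      by_cases hcard : 𝒞.card ≤ n
      · exact hsub 𝒞 (Finset.Subset.refl _) hcard
      · push_neg at hcard
        have hpick : ∀ C ∈ 𝒞, ∃ y, ∀ D ∈ 𝒞.erase C, y ∈ D := by
          intro C hC
          exact ih (𝒞.erase C) (Finset.erase_ssubset hC)
            (fun D hD => hconv D (Finset.mem_of_mem_erase hD))
            (fun 𝒟 h𝒟 hc => hsub 𝒟 (h𝒟.trans (𝒞.erase_subset C)) hc)
        obtain ⟨x₀, -⟩ := hsub ∅ (Finset.empty_subset 𝒞) (by simp)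
        have : Nonempty S := ⟨x₀⟩
        choose! x hx using hpick
        rcases aux_chain x 𝒞 with ⟨B, hBsub, hBne, hrep⟩ | ⟨C, hchainC, hcardC, _⟩
        · refine ⟨B.sup' hBne x, fun C hC => ?_⟩
          obtain ⟨Bi, hBisub, hBine, heq⟩ := hrep C hC
          rw [← heq]
          have hclosed : ∀ a, a ∈ C → ∀ b, b ∈ C → a ⊔ b ∈ C :=
            fun a ha b hb => hconv C hC ha hb
          apply Finset.sup'_induction hBine x hclosed
          intro D hD
          have hD' := hBisub hD
          have hDC : D ≠ C := Finset.ne_of_mem_erase hD'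
          have hD𝒞 : D ∈ 𝒞 := Finset.mem_of_mem_erase hD'
          exact hx D hD𝒞 C (Finset.mem_erase.mpr ⟨hDC.symm, hC⟩)
        · exfalso
          have := hd C hchainC
          omega
    exact main
end

section
/- A convexity space is a convex geometry (i.e. for every convex K and distinct x, y ∉ K, y ∈ co(K ∪ {x}) implies x ∉ co(K ∪ {y})) if and only if every polytope is the convex hull of its extreme points. -/
/-!
In any convexity, the hull of a set is the directed union of the hulls of its finite subsets.

If anti-exchange holds, a point `a` outside a convex set `K` is extreme in `co(K ∪ {a})`: adding
to `K`, one at a time, finitely many points of `co(K ∪ {a}) \ {a}` never captures `a`, since at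
each step anti-exchange applies to the hull built so far. Hence every point of a finite set `F`
that is not in the hull of the other points of `F` is extreme in `co F`, and discarding the
other points one by one spans `co F` by extreme points.

Conversely, if `y ∈ co(K ∪ {x})` and `x ∈ co(K ∪ {y})`, take finite witnesses of both
memberships. Neither `x` nor `y` is extreme in the hull `P` of their union, so all extreme points
of `P` lie in `K`, and `P = co(ext P) ⊆ K` contradicts `x ∈ P`.
-/

/-- An abstract convexity on a set `X`. -/
structure Convexity (X : Type*) where
  sets : Set (Set X)
  empty_mem : ∅ ∈ sets
  sInter_mem : ∀ 𝒞 : Set (Set X), 𝒞 ⊆ sets → ⋂₀ 𝒞 ∈ sets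
  directed_sUnion_mem : ∀ 𝒞 : Set (Set X), 𝒞 ⊆ sets → 𝒞.Nonempty →
    DirectedOn (· ⊆ ·) 𝒞 → ⋃₀ 𝒞 ∈ sets

/-- The convex hull with respect to a convexity. -/
def Convexity.hull {X : Type*} (c : Convexity X) (A : Set X) : Set X :=
  ⋂₀ {C | C ∈ c.sets ∧ A ⊆ C}

/-- The convex geometry (anti-exchange) property. -/
def Convexity.IsConvexGeometry {X : Type*} (c : Convexity X) : Prop :=
  ∀ K ∈ c.sets, ∀ x y : X, x ≠ y → x ∉ K → y ∉ K →
    y ∈ c.hull (K ∪ {x}) → x ∉ c.hull (K ∪ {y})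

namespace Convexity

variable {X : Type*} (c : Convexity X)

def extremePoints (A : Set X) : Set X :=
  {x | x ∈ A ∧ x ∉ c.hull (A \ {x})}

lemma subset_hull (A : Set X) : A ⊆ c.hull A := fun _ hx =>
  Set.mem_sInter.2 fun _ hC => hC.2 hx

lemma hull_mem (A : Set X) : c.hull A ∈ c.sets :=
  c.sInter_mem _ fun _ hC => hC.1

lemma hull_min {A C : Set X} (hAC : A ⊆ C) (hC : C ∈ c.sets) : c.hull A ⊆ C :=
  Set.sInter_subset_of_mem ⟨hC, hAC⟩

lemma hull_mono {A B : Set X} (h : A ⊆ B) : c.hull A ⊆ c.hull B :=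
  c.hull_min (h.trans (c.subset_hull B)) (c.hull_mem B)

lemma hull_eq_self {C : Set X} (hC : C ∈ c.sets) : c.hull C = C :=
  (c.hull_min subset_rfl hC).antisymm (c.subset_hull C)

lemma hull_diff_singleton_eq {A : Set X} {x : X} (hx : x ∈ c.hull (A \ {x})) :
    c.hull (A \ {x}) = c.hull A := by
  refine (c.hull_mono Set.sdiff_subset).antisymm (c.hull_min (fun z hz => ?_) (c.hull_mem _))
  by_cases hzx : z = x
  · exact hzx ▸ hx
  · exact c.subset_hull _ ⟨hz, hzx⟩

lemma exists_finset_of_mem_hull {A : Set X} {x : X} (hx : x ∈ c.hull A) :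
    ∃ F : Finset X, ↑F ⊆ A ∧ x ∈ c.hull ↑F := by
  classical
  set 𝒞 : Set (Set X) := {S | ∃ F : Finset X, ↑F ⊆ A ∧ S = c.hull ↑F}
  have hdir : DirectedOn (· ⊆ ·) 𝒞 := by
    rintro _ ⟨F₁, hF₁, rfl⟩ _ ⟨F₂, hF₂, rfl⟩
    refine ⟨c.hull ↑(F₁ ∪ F₂), ⟨F₁ ∪ F₂, ?_, rfl⟩, c.hull_mono ?_, c.hull_mono ?_⟩ <;>
      simp [Set.union_subset hF₁ hF₂]
  have hconvex : ⋃₀ 𝒞 ∈ c.sets :=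
    c.directed_sUnion_mem 𝒞 (by rintro _ ⟨F, -, rfl⟩; exact c.hull_mem _)
      ⟨_, ∅, by simp, rfl⟩ hdir
  have hA : A ⊆ ⋃₀ 𝒞 := fun a ha =>
    ⟨c.hull ↑({a} : Finset X), ⟨{a}, by simpa using ha, rfl⟩, c.subset_hull _ (by simp)⟩
  obtain ⟨_, ⟨F, hF, rfl⟩, hxF⟩ := c.hull_min hA hconvex hx
  exact ⟨F, hF, hxF⟩

lemma extremePoints_subset (A : Set X) : c.extremePoints A ⊆ A := fun _ hx => hx.1

lemma extremePoints_hull_subset (A : Set X) : c.extremePoints (c.hull A) ⊆ A := by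
  intro z ⟨hz, hz_ext⟩
  by_contra hzA
  have hA : A ⊆ c.hull A \ {z} := fun w hw => ⟨c.subset_hull A hw, by rintro rfl; exact hzA hw⟩
  exact hz_ext (c.hull_mono hA hz)

lemma notMem_extremePoints_of_mem_hull {A B : Set X} {x : X} (hB : B ⊆ A \ {x})
    (hx : x ∈ c.hull B) : x ∉ c.extremePoints A :=
  fun h => h.2 (c.hull_mono hB hx)

lemma mem_extremePoints_of_subset {A B : Set X} {x : X} (hAB : A ⊆ B) (hxA : x ∈ A)
    (hxB : x ∈ c.extremePoints B) : x ∈ c.extremePoints A :=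
  ⟨hxA, fun h => hxB.2 (c.hull_mono (Set.sdiff_subset_sdiff_left hAB) h)⟩

variable {c}

lemma IsConvexGeometry.notMem_hull_union_finset (hc : c.IsConvexGeometry) {K : Set X}
    (hK : K ∈ c.sets) {a : X} (ha : a ∉ K) (G : Finset X)
    (hG : ↑G ⊆ c.hull (K ∪ {a}) \ {a}) : a ∉ c.hull (K ∪ ↑G) := by
  classical
  induction G using Finset.induction_on with
  | empty => simpa [c.hull_eq_self hK] using ha
  | insert g G _ ih =>
    rw [Finset.coe_insert, Set.insert_subset_iff] at hG
    set K' := c.hull (K ∪ ↑G)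
    have haK' : a ∉ K' := ih hG.2
    have hsub : K ∪ ↑(insert g G) ⊆ K' ∪ {g} := by
      rw [Finset.coe_insert, Set.union_insert, ← Set.union_singleton]
      exact Set.union_subset_union_left _ (c.subset_hull _)
    by_cases hgK' : g ∈ K'
    · exact fun h => haK' (c.hull_min (hsub.trans (Set.union_subset subset_rfl
        (Set.singleton_subset_iff.2 hgK'))) (c.hull_mem _) h)
    · have hgK'a : g ∈ c.hull (K' ∪ {a}) :=
        c.hull_mono (Set.union_subset_union_left _ (Set.subset_union_left.trans
          (c.subset_hull _))) hG.1.1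
      exact fun h =>
        hc K' (c.hull_mem _) a g (Ne.symm hG.1.2) haK' hgK' hgK'a (c.hull_mono hsub h)

lemma IsConvexGeometry.mem_extremePoints_hull_union_singleton (hc : c.IsConvexGeometry)
    {K : Set X} (hK : K ∈ c.sets) {a : X} (ha : a ∉ K) :
    a ∈ c.extremePoints (c.hull (K ∪ {a})) := by
  refine ⟨c.subset_hull _ (Or.inr rfl), fun h => ?_⟩
  obtain ⟨G, hG, haG⟩ := c.exists_finset_of_mem_hull h
  exact hc.notMem_hull_union_finset hK ha G hG (c.hull_mono Set.subset_union_right haG)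

lemma IsConvexGeometry.mem_extremePoints_hull (hc : c.IsConvexGeometry) {A : Set X} {a : X}
    (haA : a ∈ A) (ha : a ∉ c.hull (A \ {a})) : a ∈ c.extremePoints (c.hull A) := by
  refine c.mem_extremePoints_of_subset (c.hull_mono fun z hz => ?_) (c.subset_hull A haA)
    (hc.mem_extremePoints_hull_union_singleton (c.hull_mem (A \ {a})) ha)
  by_cases hza : z = a
  · exact Or.inr hza
  · exact Or.inl (c.subset_hull _ ⟨hz, hza⟩)

theorem IsConvexGeometry.hull_extremePoints_hull (hc : c.IsConvexGeometry) (F : Finset X) :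
    c.hull (c.extremePoints (c.hull ↑F)) = c.hull ↑F := by
  classical
  induction F using Finset.strongInduction with
  | H F ih =>
    by_cases h : ∃ a ∈ F, a ∈ c.hull (↑F \ {a})
    · obtain ⟨a, haF, ha⟩ := h
      rw [← c.hull_diff_singleton_eq ha, ← Finset.coe_erase]
      exact ih _ (Finset.erase_ssubset haF)
    · push Not at h
      exact (c.hull_min (c.extremePoints_subset _) (c.hull_mem _)).antisymm
        (c.hull_mono fun a ha => hc.mem_extremePoints_hull ha (h a ha))

theorem isConvexGeometry_of_hull_extremePoints
    (h : ∀ F : Finset X, c.hull ↑F = c.hull (c.extremePoints (c.hull ↑F))) :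
    c.IsConvexGeometry := by
  classical
  intro K hK x y hxy hxK hyK hy hx
  obtain ⟨Fy, hFy, hyFy⟩ := c.exists_finset_of_mem_hull hy
  obtain ⟨Fx, hFx, hxFx⟩ := c.exists_finset_of_mem_hull hx
  set P := c.hull ↑(Fx ∪ Fy)
  have hFxP : ↑Fx ⊆ P \ {x} := fun z hz =>
    ⟨c.subset_hull _ (by simp [Finset.mem_coe.1 hz]), by
      rintro rfl; exact (hFx hz).elim hxK hxy⟩
  have hFyP : ↑Fy ⊆ P \ {y} := fun z hz =>
    ⟨c.subset_hull _ (by simp [Finset.mem_coe.1 hz]), by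
      rintro rfl; exact (hFy hz).elim hyK (Ne.symm hxy)⟩
  have hext : c.extremePoints P ⊆ K := by
    intro z hz
    have hzx : z ≠ x := by rintro rfl; exact c.notMem_extremePoints_of_mem_hull hFxP hxFx hz
    have hzy : z ≠ y := by rintro rfl; exact c.notMem_extremePoints_of_mem_hull hFyP hyFy hz
    rcases Finset.mem_union.1 (c.extremePoints_hull_subset _ hz) with hzF | hzF
    · exact (hFx hzF).resolve_right hzy
    · exact (hFy hzF).resolve_right hzx
  have hPK : P ⊆ K := (h _).trans_subset (c.hull_min hext hK)
  exact hxK (hPK (c.hull_min (hFxP.trans Set.sdiff_subset) (c.hull_mem _) hxFx))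

end Convexity

/-- Jamison–Edelman: a convexity space is a convex geometry iff every polytope
is the convex hull of its extreme points. -/
theorem convexGeometry_iff_polytopes_hull_extreme {X : Type*} (c : Convexity X) :
    c.IsConvexGeometry ↔
      ∀ F : Finset X,
        c.hull ↑F = c.hull {x | x ∈ c.hull ↑F ∧ x ∉ c.hull (c.hull ↑F \ {x})} :=
  ⟨fun hc F => (hc.hull_extremePoints_hull F).symm,
    Convexity.isConvexGeometry_of_hull_extremePoints⟩
end

section
/- A semilattice equipped with the ideal convexity (convex sets are the downward-closed subsemilattices) is a convex geometry if and only if it is a chain. -/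
/-
If `a` and `b` are incomparable, take `K = Iic b`: the hull of `K ∪ {a}` contains `a ⊔ b`, and the
hull of `K ∪ {a ⊔ b}` contains `a`, violating anti-exchange. In a chain every lower set is closed
under `⊔`, so the hull of `K ∪ {u}` is just `K ∪ Iic u`; hence `y ∈ co(K ∪ {x})` and
`x ∈ co(K ∪ {y})` with `x, y ∉ K` force `y ≤ x ≤ y`.
-/

/-- The ideal convexity on a semilattice: lower subsemilattices. -/
def IdealConvex {S : Type*} [SemilatticeSup S] (T : Set S) : Prop :=
  (∀ ⦃x⦄, x ∈ T → ∀ ⦃y⦄, y ∈ T → x ⊔ y ∈ T) ∧ ∀ ⦃x y : S⦄, y ∈ T → x ≤ y → x ∈ T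

def idealHull {S : Type*} [SemilatticeSup S] (A : Set S) : Set S :=
  ⋂₀ {T | IdealConvex T ∧ A ⊆ T}

section IdealHull

variable {S : Type*} [SemilatticeSup S] {A T : Set S} {a b : S}

theorem IdealConvex.of_isLowerSet (htot : ∀ a b : S, a ≤ b ∨ b ≤ a) (hT : IsLowerSet T) :
    IdealConvex T := by
  refine ⟨fun x hx y hy => ?_, fun x y hy hxy => hT hxy hy⟩
  rcases htot x y with hxy | hyx
  · rwa [sup_eq_right.mpr hxy]
  · rwa [sup_eq_left.mpr hyx]

theorem IdealConvex.isLowerSet (hT : IdealConvex T) : IsLowerSet T :=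
  fun _ _ hxy hy => hT.2 hy hxy

theorem idealConvex_Iic (a : S) : IdealConvex (Set.Iic a) :=
  ⟨fun _ hx _ hy => sup_le hx hy, fun _ _ hy hxy => hxy.trans hy⟩

theorem subset_idealHull : A ⊆ idealHull A :=
  fun _ ha _ hT => hT.2 ha

theorem idealHull_subset (hT : IdealConvex T) (hAT : A ⊆ T) : idealHull A ⊆ T :=
  fun _ hx => hx T ⟨hT, hAT⟩

theorem idealConvex_idealHull : IdealConvex (idealHull A) :=
  ⟨fun _ hx _ hy T hT => hT.1.1 (hx T hT) (hy T hT), fun _ _ hy hxy T hT => hT.1.2 (hy T hT) hxy⟩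

theorem sup_mem_idealHull (ha : a ∈ A) (hb : b ∈ A) : a ⊔ b ∈ idealHull A :=
  idealConvex_idealHull.1 (subset_idealHull ha) (subset_idealHull hb)

theorem mem_idealHull_of_le (hb : b ∈ A) (hab : a ≤ b) : a ∈ idealHull A :=
  idealConvex_idealHull.2 (subset_idealHull hb) hab

theorem le_of_mem_idealHull_union_singleton (htot : ∀ a b : S, a ≤ b ∨ b ≤ a) {K : Set S}
    (hK : IdealConvex K) (hbK : b ∉ K) (hb : b ∈ idealHull (K ∪ {a})) : b ≤ a := by
  have hconv : IdealConvex (K ∪ Set.Iic a) :=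
    .of_isLowerSet htot (hK.isLowerSet.union (isLowerSet_Iic a))
  have hsub : K ∪ {a} ⊆ K ∪ Set.Iic a :=
    Set.union_subset_union_right K (Set.singleton_subset_iff.mpr le_rfl)
  exact (idealHull_subset hconv hsub hb).resolve_left hbK

end IdealHull

/-- A semilattice with the ideal convexity is a convex geometry iff it is a chain. -/
theorem idealConvexity_convexGeometry_iff_chain {S : Type*} [SemilatticeSup S] :
    (∀ K : Set S, IdealConvex K → ∀ x y : S, x ≠ y → x ∉ K → y ∉ K →
      y ∈ idealHull (K ∪ {x}) → x ∉ idealHull (K ∪ {y})) ↔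
    ∀ a b : S, a ≤ b ∨ b ≤ a := by
  constructor
  · intro hanti a b
    by_contra! ⟨hab, hba⟩
    refine hanti (Set.Iic b) (idealConvex_Iic b) a (a ⊔ b) (fun h => hba (h ▸ le_sup_right))
      hab (fun h => hab (le_sup_left.trans h)) ?_ ?_
    · exact sup_mem_idealHull (.inr rfl) (.inl le_rfl)
    · exact mem_idealHull_of_le (.inr rfl) le_sup_left
  · intro htot K hK x y hne hxK hyK hy hx
    exact hne (le_antisymm (le_of_mem_idealHull_union_singleton htot hK hxK hx)
      (le_of_mem_idealHull_union_singleton htot hK hyK hy))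
end

section
/- A semilattice equipped with the order-algebraic convexity (convex sets are the order-convex subsemilattices) is a convex geometry if and only if it is a tree, i.e. every principal filter ↑x is a chain. -/
/-- The order-algebraic convexity on a semilattice: order-convex subsemilattices. -/
def OrderAlgConvex {S : Type*} [SemilatticeSup S] (T : Set S) : Prop :=
  (∀ ⦃x⦄, x ∈ T → ∀ ⦃y⦄, y ∈ T → x ⊔ y ∈ T) ∧
  ∀ ⦃x z : S⦄, x ∈ T → z ∈ T → ∀ ⦃y : S⦄, x ≤ y → y ≤ z → y ∈ T

def orderAlgHull {S : Type*} [SemilatticeSup S] (A : Set S) : Set S :=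
  ⋂₀ {T | OrderAlgConvex T ∧ A ⊆ T}

/-!
If `a, b ≥ x` are incomparable, then `K = [x, a]` is convex and the points `a ⊔ b`
and `b` lie in each other's hull over `K`: `b` is between `x` and `a ⊔ b`, and `a ⊔ b` is the
join of `a` and `b`. So anti-exchange fails unless `S` is a tree.

Conversely, the hull of `A` only contains points above some point of `A`, and stays below every
upper bound of `A`. So if `x ≠ y` lie in each other's hulls over `K`, each of them is above some
point of `K`. In a tree, a point `z ∉ K` above some `k ∈ K` is an upper bound of the convex set
`K`, since `z` is comparable with every `k ⊔ k'` and cannot lie below it. Hence `x` and `y` are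
upper bounds of `K`, and therefore `y ≤ x ≤ y`.
-/

namespace OrderAlgConvex

variable {S : Type*} [SemilatticeSup S]

theorem sInter {𝒯 : Set (Set S)} (h𝒯 : ∀ T ∈ 𝒯, OrderAlgConvex T) : OrderAlgConvex (⋂₀ 𝒯) :=
  ⟨fun _ hx _ hy T hT => (h𝒯 T hT).1 (hx T hT) (hy T hT),
    fun _ _ hx hz _ hxy hyz T hT => (h𝒯 T hT).2 (hx T hT) (hz T hT) hxy hyz⟩

theorem Icc (x a : S) : OrderAlgConvex (Set.Icc x a) :=
  ⟨fun _ hp _ hq => ⟨hp.1.trans le_sup_left, sup_le hp.2 hq.2⟩,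
    fun _ _ hp hq _ hpr hrq => ⟨hp.1.trans hpr, hrq.trans hq.2⟩⟩

theorem Iic (x : S) : OrderAlgConvex (Set.Iic x) :=
  ⟨fun _ hp _ hq => sup_le hp hq, fun _ _ _ hz _ _ hyz => hyz.trans hz⟩

theorem upperClosure (A : Set S) : OrderAlgConvex (_root_.upperClosure A : Set S) :=
  ⟨fun _ hu _ _ => (_root_.upperClosure A).upper le_sup_left hu,
    fun _ _ hx _ _ hxy _ => (_root_.upperClosure A).upper hxy hx⟩

theorem mem_upperBounds_of_le {K : Set S} (hK : OrderAlgConvex K)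
    (htree : ∀ x a b : S, x ≤ a → x ≤ b → a ≤ b ∨ b ≤ a)
    {k z : S} (hk : k ∈ K) (hkz : k ≤ z) (hz : z ∉ K) : z ∈ upperBounds K := by
  intro k' hk'
  rcases htree k z (k ⊔ k') hkz le_sup_left with hz_le | hsup_le
  · exact absurd (hK.2 hk (hK.1 hk hk') hkz hz_le) hz
  · exact le_sup_right.trans hsup_le

end OrderAlgConvex

section Hull

variable {S : Type*} [SemilatticeSup S] {A T : Set S}

theorem orderAlgConvex_orderAlgHull (A : Set S) : OrderAlgConvex (orderAlgHull A) :=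
  OrderAlgConvex.sInter fun _ hT => hT.1

theorem subset_orderAlgHull (A : Set S) : A ⊆ orderAlgHull A :=
  Set.subset_sInter fun _ hT => hT.2

theorem orderAlgHull_subset (hT : OrderAlgConvex T) (hAT : A ⊆ T) : orderAlgHull A ⊆ T :=
  Set.sInter_subset_of_mem ⟨hT, hAT⟩

theorem orderAlgHull_subset_upperClosure (A : Set S) : orderAlgHull A ⊆ upperClosure A :=
  orderAlgHull_subset (OrderAlgConvex.upperClosure A) subset_upperClosure

theorem le_of_mem_orderAlgHull {x y : S} (hx : x ∈ upperBounds A) (hy : y ∈ orderAlgHull A) :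
    y ≤ x :=
  orderAlgHull_subset (OrderAlgConvex.Iic x) hx hy

theorem exists_mem_le_of_mem_orderAlgHull_union_singleton {K : Set S} {x y : S} (hxy : x ≠ y)
    (hy : y ∈ orderAlgHull (K ∪ {x})) (hx : x ∈ orderAlgHull (K ∪ {y})) :
    (∃ k ∈ K, k ≤ x) ∧ ∃ k ∈ K, k ≤ y := by
  obtain ⟨a, ha, hay⟩ := mem_upperClosure.1 (orderAlgHull_subset_upperClosure _ hy)
  obtain ⟨b, hb, hbx⟩ := mem_upperClosure.1 (orderAlgHull_subset_upperClosure _ hx)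
  rcases ha with ha | rfl <;> rcases hb with hb | rfl
  · exact ⟨⟨b, hb, hbx⟩, a, ha, hay⟩
  · exact ⟨⟨a, ha, hay.trans hbx⟩, a, ha, hay⟩
  · exact ⟨⟨b, hb, hbx⟩, b, hb, hbx.trans hay⟩
  · exact absurd (le_antisymm hay hbx) hxy

end Hull

/-- A semilattice with the order-algebraic convexity is a convex geometry iff it is
a tree, i.e. every principal filter is a chain. -/
theorem orderAlgConvexity_convexGeometry_iff_tree {S : Type*} [SemilatticeSup S] :
    (∀ K : Set S, OrderAlgConvex K → ∀ x y : S, x ≠ y → x ∉ K → y ∉ K →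
      y ∈ orderAlgHull (K ∪ {x}) → x ∉ orderAlgHull (K ∪ {y})) ↔
    ∀ x a b : S, x ≤ a → x ≤ b → a ≤ b ∨ b ≤ a := by
  constructor
  · intro hanti x a b hxa hxb
    by_contra! ⟨hab, hba⟩
    refine hanti (Set.Icc x a) (OrderAlgConvex.Icc x a) (a ⊔ b) b
      (fun h => hab (le_sup_left.trans h.le)) (fun h => hba (le_sup_right.trans h.2))
      (fun h => hba h.2) ?_ ?_
    · exact (orderAlgConvex_orderAlgHull _).2 (subset_orderAlgHull _ (.inl ⟨le_rfl, hxa⟩))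
        (subset_orderAlgHull _ (.inr rfl)) hxb le_sup_right
    · exact (orderAlgConvex_orderAlgHull _).1 (subset_orderAlgHull _ (.inl ⟨hxa, le_rfl⟩))
        (subset_orderAlgHull _ (.inr rfl))
  · intro htree K hK x y hxy hxK hyK hy hx
    obtain ⟨⟨kx, hkx, hkx_le⟩, ⟨ky, hky, hky_le⟩⟩ :=
      exists_mem_le_of_mem_orderAlgHull_union_singleton hxy hy hx
    have hx_ub := hK.mem_upperBounds_of_le htree hkx hkx_le hxK
    have hy_ub := hK.mem_upperBounds_of_le htree hky hky_le hyK
    have hyx : y ≤ x :=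
      le_of_mem_orderAlgHull (Set.union_subset hx_ub (Set.singleton_subset_iff.2 le_rfl)) hy
    have hxy' : x ≤ y :=
      le_of_mem_orderAlgHull (Set.union_subset hy_ub (Set.singleton_subset_iff.2 le_rfl)) hx
    exact hxy (le_antisymm hxy' hyx)
end

section
/- A lattice equipped with the order-algebraic convexity (convex sets are the order-convex sublattices) is a convex geometry if and only if it is a chain. -/
/-!
If `a` and `b` are incomparable, the order-convex sublattice `K = [a ⊓ b, a]` violates
anti-exchange at `b` and `a ⊔ b`: the join `a ⊔ b` lies in the hull of `K ∪ {b}`, and `b`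
lies between `a ⊓ b` and `a ⊔ b`, so in the hull of `K ∪ {a ⊔ b}`.

In a chain every order-convex set is a sublattice, so the hull of a set lies between its upper
and lower closures. If `x < y`, then `y` in the hull of `K ∪ {x}` lies below some `k ∈ K`, and
`x` in the hull of `K ∪ {y}` lies above some `k' ∈ K`; then `k' ≤ x ≤ k` puts `x` in `K`.
-/

/-- The order-algebraic convexity on a lattice: order-convex sublattices. -/
def LatOrderAlgConvex {L : Type*} [Lattice L] (T : Set L) : Prop :=
  (∀ ⦃x⦄, x ∈ T → ∀ ⦃y⦄, y ∈ T → x ⊔ y ∈ T ∧ x ⊓ y ∈ T) ∧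
  ∀ ⦃x z : L⦄, x ∈ T → z ∈ T → ∀ ⦃y : L⦄, x ≤ y → y ≤ z → y ∈ T

def latOrderAlgHull {L : Type*} [Lattice L] (A : Set L) : Set L :=
  ⋂₀ {T | LatOrderAlgConvex T ∧ A ⊆ T}

open Set

section Lattice

variable {L : Type*} [Lattice L]

theorem LatOrderAlgConvex.ordConnected {T : Set L} (hT : LatOrderAlgConvex T) :
    T.OrdConnected :=
  ⟨fun _ hx _ hz _ hy => hT.2 hx hz hy.1 hy.2⟩

theorem latOrderAlgConvex_of_ordConnected [Std.Total (α := L) (· ≤ ·)] {T : Set L}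
    (hT : T.OrdConnected) : LatOrderAlgConvex T := by
  refine ⟨fun s hs t ht => ?_, fun _ _ hx hz _ hxy hyz => hT.out hx hz ⟨hxy, hyz⟩⟩
  rcases total_of (· ≤ ·) s t with hst | hts
  · rw [sup_eq_right.2 hst, inf_eq_left.2 hst]
    exact ⟨ht, hs⟩
  · rw [sup_eq_left.2 hts, inf_eq_right.2 hts]
    exact ⟨hs, ht⟩

theorem latOrderAlgConvex_Icc (a b : L) : LatOrderAlgConvex (Icc a b) :=
  ⟨fun _ hx _ hy => ⟨⟨hx.1.trans le_sup_left, sup_le hx.2 hy.2⟩,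
      ⟨le_inf hx.1 hy.1, inf_le_left.trans hx.2⟩⟩,
    fun _ _ hx hz _ hxy hyz => ⟨hx.1.trans hxy, hyz.trans hz.2⟩⟩

theorem latOrderAlgConvex_sInter {S : Set (Set L)} (hS : ∀ T ∈ S, LatOrderAlgConvex T) :
    LatOrderAlgConvex (⋂₀ S) :=
  ⟨fun _ hx _ hy => ⟨fun T hT => ((hS T hT).1 (hx T hT) (hy T hT)).1,
      fun T hT => ((hS T hT).1 (hx T hT) (hy T hT)).2⟩,
    fun _ _ hx hz _ hxy hyz T hT => (hS T hT).2 (hx T hT) (hz T hT) hxy hyz⟩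

theorem latOrderAlgConvex_latOrderAlgHull (A : Set L) : LatOrderAlgConvex (latOrderAlgHull A) :=
  latOrderAlgConvex_sInter fun _ hT => hT.1

theorem subset_latOrderAlgHull (A : Set L) : A ⊆ latOrderAlgHull A :=
  subset_sInter fun _ hT => hT.2

theorem latOrderAlgHull_subset {A T : Set L} (hT : LatOrderAlgConvex T) (hAT : A ⊆ T) :
    latOrderAlgHull A ⊆ T :=
  sInter_subset_of_mem ⟨hT, hAT⟩

theorem latOrderAlgHull_subset_upperClosure_inter_lowerClosure [Std.Total (α := L) (· ≤ ·)]
    (A : Set L) : latOrderAlgHull A ⊆ ↑(upperClosure A) ∩ ↑(lowerClosure A) :=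
  latOrderAlgHull_subset
    (latOrderAlgConvex_of_ordConnected
      ((UpperSet.upper _).ordConnected.inter (LowerSet.lower _).ordConnected))
    (subset_inter subset_upperClosure subset_lowerClosure)

theorem exists_not_antiexchange_of_not_le {a b : L} (hab : ¬a ≤ b) (hba : ¬b ≤ a) :
    ∃ K : Set L, LatOrderAlgConvex K ∧ ∃ x y : L, x ≠ y ∧ x ∉ K ∧ y ∉ K ∧
      y ∈ latOrderAlgHull (K ∪ {x}) ∧ x ∈ latOrderAlgHull (K ∪ {y}) := by
  have hK := latOrderAlgConvex_Icc (a ⊓ b) a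
  have haK : a ∈ Icc (a ⊓ b) a := ⟨inf_le_left, le_rfl⟩
  have hinfK : a ⊓ b ∈ Icc (a ⊓ b) a := ⟨le_rfl, inf_le_left⟩
  refine ⟨Icc (a ⊓ b) a, hK, b, a ⊔ b, fun h => hab (h ▸ le_sup_left), fun hb => hba hb.2,
    fun hsup => hba (le_sup_right.trans hsup.2), ?_, ?_⟩
  · have hsub := subset_latOrderAlgHull (Icc (a ⊓ b) a ∪ {b})
    exact ((latOrderAlgConvex_latOrderAlgHull _).1 (hsub (.inl haK)) (hsub (.inr rfl))).1
  · have hsub := subset_latOrderAlgHull (Icc (a ⊓ b) a ∪ {a ⊔ b})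
    exact (latOrderAlgConvex_latOrderAlgHull _).2 (hsub (.inl hinfK)) (hsub (.inr rfl))
      inf_le_right le_sup_right

end Lattice

theorem Set.OrdConnected.mem_of_lt_of_mem_lowerClosure_of_mem_upperClosure {α : Type*}
    [Preorder α] {K : Set α} (hK : K.OrdConnected) {x y : α} (hxy : x < y)
    (hy : y ∈ lowerClosure (K ∪ {x}))
    (hx : x ∈ upperClosure (K ∪ {y})) : x ∈ K := by
  obtain ⟨k, hk | rfl, hyk⟩ := mem_lowerClosure.1 hy
  · obtain ⟨k', hk' | rfl, hk'x⟩ := mem_upperClosure.1 hx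
    · exact hK.out hk' hk ⟨hk'x, hxy.le.trans hyk⟩
    · exact absurd hk'x hxy.not_ge
  · exact absurd hyk hxy.not_ge

theorem Set.OrdConnected.notMem_latOrderAlgHull_union_singleton {L : Type*} [Lattice L]
    [Std.Total (α := L) (· ≤ ·)] {K : Set L} (hK : K.OrdConnected) {x y : L} (hxy : x ≠ y)
    (hxK : x ∉ K) (hyK : y ∉ K) (hy : y ∈ latOrderAlgHull (K ∪ {x})) :
    x ∉ latOrderAlgHull (K ∪ {y}) := by
  intro hx
  obtain ⟨hy₁, hy₂⟩ := latOrderAlgHull_subset_upperClosure_inter_lowerClosure _ hy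
  obtain ⟨hx₁, hx₂⟩ := latOrderAlgHull_subset_upperClosure_inter_lowerClosure _ hx
  rcases total_of (· ≤ ·) x y with hle | hle
  · exact hxK <|
      hK.mem_of_lt_of_mem_lowerClosure_of_mem_upperClosure (hle.lt_of_ne hxy) hy₂ hx₁
  · exact hyK <|
      hK.mem_of_lt_of_mem_lowerClosure_of_mem_upperClosure (hle.lt_of_ne hxy.symm) hx₂ hy₁

/-- A lattice with the order-algebraic convexity is a convex geometry iff it is a chain. -/
theorem latOrderAlgConvexity_convexGeometry_iff_chain {L : Type*} [Lattice L] :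
    (∀ K : Set L, LatOrderAlgConvex K → ∀ x y : L, x ≠ y → x ∉ K → y ∉ K →
      y ∈ latOrderAlgHull (K ∪ {x}) → x ∉ latOrderAlgHull (K ∪ {y})) ↔
    ∀ a b : L, a ≤ b ∨ b ≤ a := by
  refine ⟨fun h a b => ?_, fun hchain K hK x y => ?_⟩
  · by_contra! hab
    obtain ⟨K, hK, x, y, hxy, hxK, hyK, hy, hx⟩ := exists_not_antiexchange_of_not_le hab.1 hab.2
    exact h K hK x y hxy hxK hyK hy hx
  · have : Std.Total (α := L) (· ≤ ·) := ⟨hchain⟩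
    exact hK.ordConnected.notMem_latOrderAlgHull_union_singleton
end

section
/- If a join-semilattice S with a least element 0 admits a basis B (a subset such that each element of S is the join of a unique finite subset of B, and 0 is the join of the empty set), then every element of B is a nonzero coprime element of S. -/
def IsSemilatticeBasis {S : Type*} [SemilatticeSup S] [OrderBot S] (B : Set S) : Prop :=
  ∀ x : S, ∃! F : Finset S, ↑F ⊆ B ∧ x = F.sup id

/-!
Since the representation of `x` by basis elements is unique, a basis element `b ≤ x` must already
occur in it: adjoining `b` does not change the join. Representations of `x ⊔ y` are therefore
the unions of those of `x` and `y`, so `b ≤ x ⊔ y` forces `b ≤ x` or `b ≤ y`; and `b ≠ ⊥` because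
`{b}` and `∅` cannot both represent `⊥`.
-/

namespace IsSemilatticeBasis

variable {S : Type*} [SemilatticeSup S] [OrderBot S] {B : Set S}

theorem eq_of_sup_eq (hB : IsSemilatticeBasis B) {F G : Finset S} (hF : ↑F ⊆ B) (hG : ↑G ⊆ B)
    (h : F.sup id = G.sup id) : F = G :=
  (hB (F.sup id)).unique ⟨hF, rfl⟩ ⟨hG, h⟩

theorem ne_bot (hB : IsSemilatticeBasis B) {b : S} (hb : b ∈ B) : b ≠ ⊥ := by
  intro hbot
  have : ({b} : Finset S) = ∅ :=
    hB.eq_of_sup_eq (by simpa using hb) (by simp) (by simp [hbot])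
  exact Finset.singleton_ne_empty b this

theorem mem_of_le_sup (hB : IsSemilatticeBasis B) {F : Finset S} (hF : ↑F ⊆ B) {b : S}
    (hb : b ∈ B) (hle : b ≤ F.sup id) : b ∈ F := by
  classical
  have hins : insert b F = F :=
    hB.eq_of_sup_eq (by simpa [Set.insert_subset_iff] using ⟨hb, hF⟩) hF
      (by simpa [Finset.sup_insert] using hle)
  exact hins ▸ Finset.mem_insert_self b F

noncomputable def repr (hB : IsSemilatticeBasis B) (x : S) : Finset S :=
  (hB x).exists.choose

theorem repr_subset (hB : IsSemilatticeBasis B) (x : S) : ↑(hB.repr x) ⊆ B :=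
  (hB x).exists.choose_spec.1

theorem sup_repr (hB : IsSemilatticeBasis B) (x : S) : (hB.repr x).sup id = x :=
  (hB x).exists.choose_spec.2.symm

theorem mem_repr_iff_le (hB : IsSemilatticeBasis B) {b : S} (hb : b ∈ B) {x : S} :
    b ∈ hB.repr x ↔ b ≤ x :=
  ⟨fun h => hB.sup_repr x ▸ Finset.le_sup (f := id) h,
    fun h => hB.mem_of_le_sup (hB.repr_subset x) hb (by rwa [hB.sup_repr])⟩

theorem repr_sup [DecidableEq S] (hB : IsSemilatticeBasis B) (x y : S) :
    hB.repr (x ⊔ y) = hB.repr x ∪ hB.repr y :=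
  hB.eq_of_sup_eq (hB.repr_subset _)
    (by rw [Finset.coe_union]; exact Set.union_subset (hB.repr_subset x) (hB.repr_subset y))
    (by rw [Finset.sup_union, hB.sup_repr, hB.sup_repr, hB.sup_repr])

theorem supPrime (hB : IsSemilatticeBasis B) {b : S} (hb : b ∈ B) : SupPrime b := by
  classical
  refine ⟨fun hmin => hB.ne_bot hb hmin.eq_bot, fun x y hle => ?_⟩
  rw [← hB.mem_repr_iff_le hb, hB.repr_sup, Finset.mem_union] at hle
  simpa only [hB.mem_repr_iff_le hb] using hle

end IsSemilatticeBasis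

/-- Every element of a basis is a nonzero coprime element. -/
theorem basis_mem_coprime {S : Type*} [SemilatticeSup S] [OrderBot S]
    (B : Set S) (hB : IsSemilatticeBasis B) :
    ∀ b ∈ B, b ≠ ⊥ ∧
      ∀ (F : Finset S) (hF : F.Nonempty), b ≤ F.sup' hF id → ∃ f ∈ F, b ≤ f := by
  intro b hb
  refine ⟨hB.ne_bot hb, fun F hF hle => ?_⟩
  rw [Finset.sup'_eq_sup] at hle
  simpa using (hB.supPrime hb).le_finset_sup.mp hle
end

section
/- In a distributive continuous lattice-ordered structure: if L is a lattice whose underlying meet-structure is a distributive continuous semilattice, then the algebraic convexity of sublattices is S₂, i.e. any two distinct points can be separated by complementary halfspaces; concretely, if x ≰ y then there is a coprime element p with p ≤ x and p ≰ y, so ↑p is a sublattice with sublattice complement separating x from y. -/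
/-!
Since every `t` is the infimum of the elements way above it, starting from `y` one finds
`y = a₀ ≪ a₁ ≪ a₂ ≪ ⋯` with `x ≰ aₙ` for all `n`. The set of elements below no `aₙ` is closed
under filtered infima (this is what `≪` provides), so Zorn's lemma gives a minimal such `p ≤ x`.
As `⋃ₙ ↓aₙ` is closed under joins, distributivity makes `p` coprime: if `p ≤ b ⊔ c` with
`p ≰ b` and `p ≰ c`, minimality puts `p ⊓ b` and `p ⊓ c`, hence their join `p`, below some `aₙ`.
-/

/-- A filtered (downward directed, nonempty) subset. -/
def IsFiltered' {L : Type*} [Preorder L] (F : Set L) : Prop :=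
  F.Nonempty ∧ ∀ a ∈ F, ∀ b ∈ F, ∃ c ∈ F, c ≤ a ∧ c ≤ b

/-- `y` is way above `x`: for every filtered set `F` with an infimum `i`,
`i ≤ x` implies `y` is above some element of `F`. -/
def WayAbove {L : Type*} [Preorder L] (y x : L) : Prop :=
  ∀ F : Set L, IsFiltered' F → ∀ i : L, IsGLB F i → i ≤ x → ∃ f ∈ F, f ≤ y

section Preorder

variable {L : Type*} [Preorder L]

lemma WayAbove.le {w t : L} (h : WayAbove w t) : t ≤ w := by
  obtain ⟨f, hf, hfw⟩ := h {t} ⟨⟨t, rfl⟩, fun a ha b hb => ⟨t, rfl, ha.ge, hb.ge⟩⟩ t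
    isGLB_singleton le_rfl
  exact (Set.mem_singleton_iff.1 hf) ▸ hfw

lemma IsChain.isFiltered' {c : Set L} (hc : IsChain (· ≤ ·) c) (hne : c.Nonempty) :
    IsFiltered' c :=
  ⟨hne, fun a ha b hb => (hc.total ha hb).elim (fun h => ⟨a, ha, le_rfl, h⟩)
    (fun h => ⟨b, hb, h, le_rfl⟩)⟩

theorem exists_le_minimal_of_isGLB_mem (hdom : ∀ F : Set L, IsFiltered' F → ∃ i : L, IsGLB F i)
    {S : Set L} (hS : ∀ F ⊆ S, IsFiltered' F → ∀ i, IsGLB F i → i ∈ S) {x : L} (hx : x ∈ S) :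
    ∃ p ≤ x, Minimal (· ∈ S) p := by
  obtain ⟨p, hpx, hp⟩ := zorn_le_nonempty₀ (α := Lᵒᵈ) (OrderDual.ofDual ⁻¹' S)
    (fun c hcS hc y hy => by
      have hc' : IsFiltered' (OrderDual.toDual ⁻¹' c) := IsChain.isFiltered' hc.symm ⟨y, hy⟩
      obtain ⟨i, hi⟩ := hdom _ hc'
      exact ⟨i, hS _ hcS hc' i hi, fun z hz => hi.1 hz⟩) x hx
  exact ⟨p, hpx, hp⟩

theorem exists_wayAbove_not_le {x t : L} (ht : IsGLB {w | WayAbove w t} t) (hxt : ¬ x ≤ t) :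
    ∃ w, WayAbove w t ∧ ¬ x ≤ w := by
  by_contra! h
  exact hxt (ht.2 h)

theorem exists_wayAbove_seq (hcont : ∀ t : L, IsGLB {w | WayAbove w t} t) {x y : L}
    (hxy : ¬ x ≤ y) :
    ∃ a : ℕ → L, a 0 = y ∧ (∀ n, WayAbove (a (n + 1)) (a n)) ∧ ∀ n, ¬ x ≤ a n := by
  -- No `t` with `x ≰ t` is accessible for `r`, and a descending `r`-chain from `y` is the sequence.
  set r : L → L → Prop := fun w t => WayAbove w t ∧ ¬ x ≤ w
  have hacc : ∀ t, Acc r t → x ≤ t := fun t ht => ht.rec fun t _ ih => by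
    by_contra hxt
    obtain ⟨w, hw, hxw⟩ := exists_wayAbove_not_le (hcont t) hxt
    exact hxw (ih w ⟨hw, hxw⟩)
  obtain ⟨a, rfl, ha⟩ := not_acc_iff_exists_descending_chain.1 fun h => hxy (hacc _ h)
  exact ⟨a, rfl, fun n => (ha n).1, fun n => n.casesOn hxy fun n => (ha n).2⟩

/-- Along a way-above sequence, `⋃ n, Iic (a n)` is Scott open in the order dual. -/
theorem isGLB_notMem_iUnion_Iic {a : ℕ → L} (ha : ∀ n, WayAbove (a (n + 1)) (a n))
    {F : Set L} (hFa : F ⊆ (⋃ n, Set.Iic (a n))ᶜ) (hF : IsFiltered' F) {i : L} (hi : IsGLB F i) :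
    i ∉ ⋃ n, Set.Iic (a n) := by
  rintro ⟨_, ⟨n, rfl⟩, hin⟩
  obtain ⟨f, hf, hfa⟩ := ha n F hF i hi hin
  exact hFa hf (Set.mem_iUnion.2 ⟨n + 1, hfa⟩)

end Preorder

section Lattice

variable {L : Type*}

theorem Monotone.supClosed_iUnion_Iic [SemilatticeSup L] {a : ℕ → L} (ha : Monotone a) :
    SupClosed (⋃ n, Set.Iic (a n)) := by
  simp only [SupClosed, Set.mem_iUnion, Set.mem_Iic]
  rintro b ⟨n, hb⟩ c ⟨m, hc⟩
  exact ⟨max n m, sup_le (hb.trans (ha (le_max_left n m))) (hc.trans (ha (le_max_right n m)))⟩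

theorem SupClosed.coprime_of_minimal_notMem [DistribLattice L] {D : Set L} (hD : SupClosed D)
    {p : L} (hp : Minimal (· ∉ D) p) : ∀ b c : L, p ≤ b ⊔ c → p ≤ b ∨ p ≤ c := by
  intro b c hbc
  by_contra! h
  have inf_mem : ∀ d, ¬ p ≤ d → p ⊓ d ∈ D := fun d hd => by
    by_contra hpd
    exact hd ((hp.2 hpd inf_le_left).trans inf_le_right)
  have : p = p ⊓ b ⊔ p ⊓ c := by rw [← inf_sup_left, inf_eq_left.2 hbc]
  exact hp.1 (this ▸ hD (inf_mem b h.1) (inf_mem c h.2))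

theorem isSublattice_Ici [Lattice L] (p : L) : IsSublattice (Set.Ici p) :=
  ⟨(isUpperSet_Ici p).supClosed, fun _ ha _ hb => le_inf ha hb⟩

theorem isSublattice_compl_Ici [Lattice L] {p : L} (hp : ∀ b c : L, p ≤ b ⊔ c → p ≤ b ∨ p ≤ c) :
    IsSublattice (Set.Ici p)ᶜ :=
  ⟨fun _ hb _ hc hbc => (hp _ _ hbc).elim hb hc, fun _ hb _ _ hbc => hb (hbc.trans inf_le_left)⟩

end Lattice

/-- On a distributive lattice whose underlying meet-semilattice is a continuous
semilattice (filtered infima exist and each point is the filtered infimum of the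
elements way above it), the algebraic convexity of sublattices is `S₂`: if `x ≰ y`
there is a coprime `p` with `p ≤ x`, `p ≰ y`, and `↑p` is a halfspace (a sublattice
with sublattice complement) separating `x` from `y`. -/
theorem algConvexity_S2_of_distributive_continuous {L : Type*} [DistribLattice L]
    (hdom : ∀ F : Set L, IsFiltered' F → ∃ i : L, IsGLB F i)
    (hcont : ∀ x : L, IsFiltered' {y | WayAbove y x} ∧ IsGLB {y | WayAbove y x} x) :
    ∀ x y : L, ¬ x ≤ y →
      ∃ p : L, (∀ a b : L, p ≤ a ⊔ b → p ≤ a ∨ p ≤ b) ∧ p ≤ x ∧ ¬ p ≤ y ∧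
        x ∈ Set.Ici p ∧ y ∉ Set.Ici p ∧
        (∀ a ∈ Set.Ici p, ∀ b ∈ Set.Ici p, a ⊔ b ∈ Set.Ici p ∧ a ⊓ b ∈ Set.Ici p) ∧
        (∀ a ∈ (Set.Ici p)ᶜ, ∀ b ∈ (Set.Ici p)ᶜ, a ⊔ b ∈ (Set.Ici p)ᶜ ∧ a ⊓ b ∈ (Set.Ici p)ᶜ) := by
  intro x y hxy
  obtain ⟨a, rfl, ha, hxa⟩ := exists_wayAbove_seq (fun t => (hcont t).2) hxy
  set D := ⋃ n, Set.Iic (a n)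
  have hxD : x ∉ D := by simpa [D] using hxa
  obtain ⟨p, hpx, hp⟩ := exists_le_minimal_of_isGLB_mem hdom
    (fun F hFD hF i hi => isGLB_notMem_iUnion_Iic ha hFD hF hi) hxD
  have hcop := (monotone_nat_of_le_succ fun n => (ha n).le).supClosed_iUnion_Iic
    |>.coprime_of_minimal_notMem hp
  have hpy : ¬ p ≤ a 0 := fun h => hp.1 (Set.mem_iUnion.2 ⟨0, h⟩)
  have closed {s : Set L} (hs : IsSublattice s) : ∀ b ∈ s, ∀ c ∈ s, b ⊔ c ∈ s ∧ b ⊓ c ∈ s :=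
    fun b hb c hc => ⟨hs.1 hb hc, hs.2 hb hc⟩
  exact ⟨p, hcop, hpx, hpy, hpx, hpy, closed (isSublattice_Ici p),
    closed (isSublattice_compl_Ici hcop)⟩
end
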